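/- arXiv:2302.11073 — 5 statements merged into one kernel-verified Lean document; each statement's English description precedes it below -/
import Mathlib

section
/- Let n, k be integers with k ≥ 1, and let γ be a real number with 0 < γ and k < n/2 − γ; set a₀ = (n−k−2)/2. Then for every real β with 0 < β ≤ k/2, the function a ↦ Θⁱ(γ,a,β) is strictly increasing on the interval [a₀, ∞). -/
/-!
Writing `s± = (1 - γ + a ± β)/2`, the symbol is `Θⁱ(γ,a,β) = 4^γ · R(s₊) · R(s₋)` with
`R(s) = Γ(s + γ)/Γ(s)`. Since `log Γ` is strictly convex on `(0, ∞)`, its increment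
`log Γ(s + γ) - log Γ(s)` over a step of fixed length `γ > 0` is strictly increasing, so `R` is
positive and strictly increasing there; both `s±` increase with `a` and are positive on `[a₀, ∞)`.
-/

/-- The Fourier symbol `Θ(a,b)` at a purely imaginary argument `b = βi`:
`Θⁱ(γ,a,β) = 4^γ · Γ((1+γ+a+β)/2) · Γ((1+γ+a−β)/2) / (Γ((1−γ+a+β)/2) · Γ((1−γ+a−β)/2))`. -/
noncomputable def ThetaI (γ a β : ℝ) : ℝ :=
  (4 : ℝ) ^ γ * Real.Gamma ((1 + γ + a + β) / 2) * Real.Gamma ((1 + γ + a - β) / 2) /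
    (Real.Gamma ((1 - γ + a + β) / 2) * Real.Gamma ((1 - γ + a - β) / 2))

open Real Set

/-- Bohr–Mollerup only gives convexity; strictness comes from `log Γ(x) = log Γ(x + 1) - log x`. -/
theorem Real.strictConvexOn_log_Gamma : StrictConvexOn ℝ (Ioi 0) (log ∘ Gamma) := by
  have hshift : ConvexOn ℝ (Ioi 0) (fun x ↦ log (Gamma (x + 1))) :=
    (convexOn_log_Gamma.translate_left 1).subset (fun x (hx : 0 < x) ↦ show 0 < 1 + x by linarith)
      (convex_Ioi 0)
  refine (hshift.add_strictConvexOn strictConcaveOn_log_Ioi.neg).congr fun x hx ↦ ?_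
  have hx : 0 < x := hx
  simp [Gamma_add_one hx.ne', log_mul hx.ne' (Gamma_pos_of_pos hx).ne']

theorem StrictConvexOn.sub_comp_add_lt {s : Set ℝ} {f : ℝ → ℝ} (hf : StrictConvexOn ℝ s f)
    {γ x y : ℝ} (hγ : 0 < γ) (hx : x ∈ s) (hy : y + γ ∈ s) (hxy : x < y) :
    f (x + γ) - f x < f (y + γ) - f y := by
  have hxγ : x + γ ∈ s := hf.1.ordConnected.out hx hy ⟨by linarith, by linarith⟩
  have hy' : y ∈ s := hf.1.ordConnected.out hx hy ⟨hxy.le, by linarith⟩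
  -- compare both secants with the one from `x` to `y + γ`
  have h₁ := hf.secant_strict_mono hx hxγ hy (by linarith) (by linarith) (by linarith : x + γ < y + γ)
  have h₂ := hf.secant_strict_mono hy hx hy' (by linarith) (by linarith) hxy
  have hmid : (f x - f (y + γ)) / (x - (y + γ)) = (f (y + γ) - f x) / (y + γ - x) := by
    rw [← neg_sub, ← neg_sub (y + γ), neg_div_neg_eq]
  have h := h₁.trans (hmid ▸ h₂)
  rw [add_sub_cancel_left, sub_add_cancel_left, div_neg, ← neg_div, neg_sub] at h
  exact (div_lt_div_iff_of_pos_right hγ).1 h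

theorem Real.Gamma_add_div_Gamma_pos {γ s : ℝ} (hγ : 0 ≤ γ) (hs : 0 < s) :
    0 < Gamma (s + γ) / Gamma s :=
  div_pos (Gamma_pos_of_pos (by linarith)) (Gamma_pos_of_pos hs)

theorem Real.strictMonoOn_Gamma_add_div_Gamma {γ : ℝ} (hγ : 0 < γ) :
    StrictMonoOn (fun s ↦ Gamma (s + γ) / Gamma s) (Ioi 0) := by
  intro x (hx : 0 < x) y (hy : 0 < y) hxy
  rw [← log_lt_log_iff (Gamma_add_div_Gamma_pos hγ.le hx) (Gamma_add_div_Gamma_pos hγ.le hy),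
    log_div, log_div]
  · exact strictConvexOn_log_Gamma.sub_comp_add_lt hγ hx (show 0 < y + γ by linarith) hxy
  all_goals exact (Gamma_pos_of_pos (by linarith)).ne'

theorem ThetaI_eq_mul_Gamma_add_div_Gamma (γ a β : ℝ) :
    ThetaI γ a β = 4 ^ γ * (Gamma ((1 - γ + a + β) / 2 + γ) / Gamma ((1 - γ + a + β) / 2)) *
      (Gamma ((1 - γ + a - β) / 2 + γ) / Gamma ((1 - γ + a - β) / 2)) := by
  rw [ThetaI, show (1 + γ + a + β) / 2 = (1 - γ + a + β) / 2 + γ by ring,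
    show (1 + γ + a - β) / 2 = (1 - γ + a - β) / 2 + γ by ring]
  ring

theorem ThetaI_strictMonoOn {γ β : ℝ} (hγ : 0 < γ) (hβ : 0 < β) :
    StrictMonoOn (fun a ↦ ThetaI γ a β) (Ioi (γ + β - 1)) := by
  intro a₁ (ha₁ : γ + β - 1 < a₁) a₂ (ha₂ : γ + β - 1 < a₂) h12
  have hR := strictMonoOn_Gamma_add_div_Gamma hγ
  have hplus := hR (show 0 < (1 - γ + a₁ + β) / 2 by linarith)
    (show 0 < (1 - γ + a₂ + β) / 2 by linarith) (by linarith)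
  have hminus := hR (show 0 < (1 - γ + a₁ - β) / 2 by linarith)
    (show 0 < (1 - γ + a₂ - β) / 2 by linarith) (by linarith)
  simp only [ThetaI_eq_mul_Gamma_add_div_Gamma]
  refine mul_lt_mul'' (mul_lt_mul_of_pos_left hplus (by positivity)) hminus ?_ ?_
  · exact mul_nonneg (by positivity) (Gamma_add_div_Gamma_pos hγ.le (by linarith)).le
  · exact (Gamma_add_div_Gamma_pos hγ.le (by linarith)).le

theorem stmt1_general (n k : ℤ) (γ : ℝ) (hγ : 0 < γ)
    (hkn : (k : ℝ) < (n : ℝ) / 2 - γ) :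
    ∀ β : ℝ, 0 < β → β ≤ (k : ℝ) / 2 →
      StrictMonoOn (fun a : ℝ => ThetaI γ a β)
        (Set.Ici (((n : ℝ) - (k : ℝ) - 2) / 2)) := by
  intro β hβ hβk
  refine (ThetaI_strictMonoOn hγ hβ).mono fun a (ha : _ ≤ a) ↦ ?_
  show γ + β - 1 < a
  linarith

theorem stmt1 (n k : ℤ) (hk : 1 ≤ k) (γ : ℝ) (hγ : 0 < γ)
    (hkn : (k : ℝ) < (n : ℝ) / 2 - γ) :
    ∀ β : ℝ, 0 < β → β ≤ (k : ℝ) / 2 →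
      StrictMonoOn (fun a : ℝ => ThetaI γ a β)
        (Set.Ici (((n : ℝ) - (k : ℝ) - 2) / 2)) :=
  stmt1_general n k γ hγ hkn
end

section
/- Let n, k be integers with k ≥ 1, and let γ be a real number with 0 < γ and k < n/2 − γ; set a₀ = (n−k−2)/2. Then for every real a ≥ a₀, the function β ↦ Θⁱ(γ,a,β) is strictly decreasing on the interval [0, k/2]. -/
/-! Write `Γ(u ± x)` for `Γ(u + x) Γ(u - x)`. With `u = (1 - γ + a)/2` and `x = β/2`,
`Θⁱ(γ,a,β) = 4^γ Γ(u + γ ± x) / Γ(u ± x)`, so the claim is that `Γ(u + γ ± x) / Γ(u ± x)`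
decreases in `x` on `0 ≤ x < u`. By Euler's limit formula this ratio is a limit of
`n^{2γ} ∏_{j ≤ n} ((u + j)² - x²) / ((u + γ + j)² - x²)`, a product of factors each antitone
in `x`; this gives monotonicity. Strictness comes from peeling off the `j = 0` factor with the
functional equation `Γ(s + 1) = s Γ(s)`. -/

open Real Filter Finset Topology

noncomputable def gammaPair (u x : ℝ) : ℝ :=
  Gamma (u + x) * Gamma (u - x)

lemma gammaPair_pos {u x : ℝ} (h₁ : -u < x) (h₂ : x < u) : 0 < gammaPair u x :=
  mul_pos (Gamma_pos_of_pos (by linarith)) (Gamma_pos_of_pos (by linarith))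

lemma gammaPair_add_one {u x : ℝ} (hp : u + x ≠ 0) (hm : u - x ≠ 0) :
    gammaPair (u + 1) x = (u ^ 2 - x ^ 2) * gammaPair u x := by
  rw [gammaPair, gammaPair, add_right_comm, add_sub_right_comm, Gamma_add_one hp,
    Gamma_add_one hm]
  ring

lemma GammaSeq_mul_GammaSeq_add_sub (u x : ℝ) {n : ℕ} (hn : n ≠ 0) :
    GammaSeq (u + x) n * GammaSeq (u - x) n =
      (n : ℝ) ^ (2 * u) * (n.factorial : ℝ) ^ 2 / ∏ j ∈ range (n + 1), ((u + j) ^ 2 - x ^ 2) := by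
  have hprod : ∏ j ∈ range (n + 1), ((u + j) ^ 2 - x ^ 2) =
      (∏ j ∈ range (n + 1), (u + x + j)) * ∏ j ∈ range (n + 1), (u - x + j) := by
    rw [← prod_mul_distrib]
    exact prod_congr rfl fun j _ => by ring
  have hpow : (n : ℝ) ^ (2 * u) = (n : ℝ) ^ (u + x) * (n : ℝ) ^ (u - x) := by
    rw [← rpow_add (by positivity)]
    ring_nf
  rw [GammaSeq, GammaSeq, div_mul_div_comm, hprod, hpow]
  ring

lemma tendsto_GammaSeq_mul_GammaSeq_add_sub (u x : ℝ) :
    Tendsto (fun n => GammaSeq (u + x) n * GammaSeq (u - x) n) atTop (𝓝 (gammaPair u x)) :=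
  (GammaSeq_tendsto_Gamma _).mul (GammaSeq_tendsto_Gamma _)

lemma add_sq_sub_sq_pos {x u t : ℝ} (hx : 0 ≤ x) (hxu : x < u) (ht : 0 ≤ t) :
    0 < (u + t) ^ 2 - x ^ 2 :=
  sub_pos.2 (pow_lt_pow_left₀ (by linarith) hx two_ne_zero)

lemma prod_range_add_sq_sub_sq_pos {x u : ℝ} (hx : 0 ≤ x) (hxu : x < u) (m : ℕ) :
    0 < ∏ j ∈ range m, ((u + j) ^ 2 - x ^ 2) :=
  prod_pos fun j _ => add_sq_sub_sq_pos hx hxu j.cast_nonneg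

lemma sub_mul_sub_le_sub_mul_sub {A B X Y : ℝ} (hBA : B ≤ A) (hXY : X ≤ Y) :
    (A - X) * (B - Y) ≤ (A - Y) * (B - X) := by
  nlinarith [mul_nonneg (sub_nonneg.2 hBA) (sub_nonneg.2 hXY)]

lemma sub_mul_sub_lt_sub_mul_sub {A B X Y : ℝ} (hBA : B < A) (hXY : X < Y) :
    (A - X) * (B - Y) < (A - Y) * (B - X) := by
  nlinarith [mul_pos (sub_pos.2 hBA) (sub_pos.2 hXY)]

section

variable {u v x y : ℝ}

lemma gammaPair_mul_le (hx : 0 ≤ x) (hxy : x ≤ y) (hyu : y < u) (huv : u ≤ v) :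
    gammaPair v y * gammaPair u x ≤ gammaPair v x * gammaPair u y := by
  have hseq : ∀ n : ℕ, n ≠ 0 →
      GammaSeq (v + y) n * GammaSeq (v - y) n * (GammaSeq (u + x) n * GammaSeq (u - x) n) ≤
        GammaSeq (v + x) n * GammaSeq (v - x) n * (GammaSeq (u + y) n * GammaSeq (u - y) n) := by
    intro n hn
    simp only [GammaSeq_mul_GammaSeq_add_sub _ _ hn, div_mul_div_comm, ← prod_mul_distrib]
    refine div_le_div_of_nonneg_left (by positivity) ?_ ?_
    · rw [prod_mul_distrib]
      exact mul_pos (prod_range_add_sq_sub_sq_pos hx (by linarith) _)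
        (prod_range_add_sq_sub_sq_pos (hx.trans hxy) hyu _)
    · refine prod_le_prod (fun j _ => ?_) (fun j _ => ?_)
      · exact (mul_pos (add_sq_sub_sq_pos hx (by linarith) j.cast_nonneg)
          (add_sq_sub_sq_pos (hx.trans hxy) hyu j.cast_nonneg)).le
      · have hj : (0 : ℝ) ≤ j := j.cast_nonneg
        exact sub_mul_sub_le_sub_mul_sub (pow_le_pow_left₀ (by linarith) (by linarith) 2)
          (pow_le_pow_left₀ hx hxy 2)
  exact le_of_tendsto_of_tendsto
    ((tendsto_GammaSeq_mul_GammaSeq_add_sub v y).mul (tendsto_GammaSeq_mul_GammaSeq_add_sub u x))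
    ((tendsto_GammaSeq_mul_GammaSeq_add_sub v x).mul (tendsto_GammaSeq_mul_GammaSeq_add_sub u y))
    ((eventually_ne_atTop 0).mono hseq)

lemma gammaPair_mul_lt (hx : 0 ≤ x) (hxy : x < y) (hyu : y < u) (huv : u < v) :
    gammaPair v y * gammaPair u x < gammaPair v x * gammaPair u y := by
  have hshift : ∀ {w z : ℝ}, 0 ≤ z → z < w →
      gammaPair (w + 1) z = (w ^ 2 - z ^ 2) * gammaPair w z :=
    fun hz hzw => gammaPair_add_one (by linarith) (by linarith)
  have hle := gammaPair_mul_le (u := u + 1) (v := v + 1) hx hxy.le (by linarith) (by linarith)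
  rw [hshift (hx.trans hxy.le) (by linarith), hshift hx (by linarith), hshift hx (by linarith),
    hshift (hx.trans hxy.le) hyu] at hle
  have hpeeled : (v ^ 2 - x ^ 2) * (u ^ 2 - y ^ 2) < (v ^ 2 - y ^ 2) * (u ^ 2 - x ^ 2) :=
    sub_mul_sub_lt_sub_mul_sub (pow_lt_pow_left₀ huv (by linarith) two_ne_zero)
      (pow_lt_pow_left₀ hxy hx two_ne_zero)
  have hR : 0 < gammaPair v x * gammaPair u y :=
    mul_pos (gammaPair_pos (by linarith) (by linarith))
      (gammaPair_pos (by linarith) (by linarith))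
  have hc : 0 < (v ^ 2 - y ^ 2) * (u ^ 2 - x ^ 2) := by
    simpa using mul_pos (add_sq_sub_sq_pos (hx.trans hxy.le) (by linarith) le_rfl)
      (add_sq_sub_sq_pos hx (by linarith) le_rfl)
  refine lt_of_mul_lt_mul_left ?_ hc.le
  calc (v ^ 2 - y ^ 2) * (u ^ 2 - x ^ 2) * (gammaPair v y * gammaPair u x)
      ≤ (v ^ 2 - x ^ 2) * (u ^ 2 - y ^ 2) * (gammaPair v x * gammaPair u y) := by linarith
    _ < (v ^ 2 - y ^ 2) * (u ^ 2 - x ^ 2) * (gammaPair v x * gammaPair u y) :=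
      mul_lt_mul_of_pos_right hpeeled hR

end

lemma ThetaI_eq_gammaPair (γ a β : ℝ) :
    ThetaI γ a β = (4 : ℝ) ^ γ *
      (gammaPair ((1 - γ + a) / 2 + γ) (β / 2) / gammaPair ((1 - γ + a) / 2) (β / 2)) := by
  rw [ThetaI, gammaPair, gammaPair]
  ring_nf

theorem stmt2_general (n k : ℤ) (γ : ℝ) (hγ : 0 < γ)
    (hkn : (k : ℝ) < (n : ℝ) / 2 - γ) :
    ∀ a : ℝ, ((n : ℝ) - (k : ℝ) - 2) / 2 ≤ a →
      StrictAntiOn (fun β : ℝ => ThetaI γ a β) (Set.Icc 0 ((k : ℝ) / 2)) := by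
  rintro a ha β₁ ⟨hβ₁, -⟩ β₂ ⟨-, hβ₂⟩ hlt
  set u := (1 - γ + a) / 2 with hu
  have hyu : β₂ / 2 < u := by linarith
  simp only [ThetaI_eq_gammaPair]
  rw [mul_lt_mul_iff_right₀ (by positivity), div_lt_div_iff₀
    (gammaPair_pos (by linarith) (by linarith)) (gammaPair_pos (by linarith) (by linarith))]
  exact gammaPair_mul_lt (by linarith) (by linarith) hyu (by linarith)

theorem stmt2 (n k : ℤ) (hk : 1 ≤ k) (γ : ℝ) (hγ : 0 < γ)
    (hkn : (k : ℝ) < (n : ℝ) / 2 - γ) :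
    ∀ a : ℝ, ((n : ℝ) - (k : ℝ) - 2) / 2 ≤ a →
      StrictAntiOn (fun β : ℝ => ThetaI γ a β) (Set.Icc 0 ((k : ℝ) / 2)) :=
  stmt2_general n k γ hγ hkn
end

section
/- Let n ≥ 4 be an integer and let γ be a real number with 0 < γ < n/2 − 1. Then for every integer m ≥ 1 and every real λ ≥ 0, one has T(γ,1, m + (n−3)/2, λ) > ((n+2γ)/(n−2γ)) · Q(n,γ). -/
/-- The Fourier symbol at a real argument `b`. -/
noncomputable def ThetaR (γ a b : ℝ) : ℝ :=
  (4 : ℝ) ^ γ * ‖Complex.Gamma (((1 + γ + a) / 2 : ℝ) + (b / 2 : ℝ) * Complex.I)‖ ^ 2 /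
    ‖Complex.Gamma (((1 - γ + a) / 2 : ℝ) + (b / 2 : ℝ) * Complex.I)‖ ^ 2

/-- The eigenvalue `Θ_{m,ℓ}` expressed as a function of the Laplace eigenvalue `λ`. -/
noncomputable def T (γ : ℝ) (k : ℤ) (a lam : ℝ) : ℝ :=
  if lam ≤ (k : ℝ) ^ 2 / 4 then ThetaI γ a (Real.sqrt ((k : ℝ) ^ 2 / 4 - lam))
  else ThetaR γ a (Real.sqrt (lam - (k : ℝ) ^ 2 / 4))

/-- The fractional curvature `Q_γ(n,1)` of the trivial solution on `Sⁿ∖S¹`. -/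
noncomputable def Qcurv (n : ℤ) (γ : ℝ) : ℝ :=
  (4 : ℝ) ^ γ * Real.Gamma (((n : ℝ) + 2 * γ) / 4) * Real.Gamma (((n : ℝ) - 2 + 2 * γ) / 4) /
    (Real.Gamma (((n : ℝ) - 2 * γ) / 4) * Real.Gamma (((n : ℝ) - 2 - 2 * γ) / 4))

open MeasureTheory Set Real ProbabilityTheory

theorem integral_rpow_mul_rpow_le {α : Type*} [MeasurableSpace α] {μ : Measure α} {f g : α → ℝ}
    (hf : Integrable f μ) (hg : Integrable g μ) (hf₀ : 0 ≤ᵐ[μ] f) (hg₀ : 0 ≤ᵐ[μ] g)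
    {a b : ℝ} (ha : 0 ≤ a) (hb : 0 ≤ b) (hab : a + b = 1) :
    ∫ x, f x ^ a * g x ^ b ∂μ ≤ (∫ x, f x ∂μ) ^ a * (∫ x, g x ∂μ) ^ b := by
  have hfg₀ : 0 ≤ᵐ[μ] fun x => f x ^ a * g x ^ b := by
    filter_upwards [hf₀, hg₀] with x hfx hgx
    exact mul_nonneg (rpow_nonneg hfx a) (rpow_nonneg hgx b)
  have hfg : AEStronglyMeasurable (fun x => f x ^ a * g x ^ b) μ :=
    ((hf.aemeasurable.pow_const a).mul (hg.aemeasurable.pow_const b)).aestronglyMeasurable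
  rw [integral_eq_lintegral_of_nonneg_ae hfg₀ hfg, integral_eq_lintegral_of_nonneg_ae hf₀
    hf.aestronglyMeasurable, integral_eq_lintegral_of_nonneg_ae hg₀ hg.aestronglyMeasurable,
    ENNReal.toReal_rpow, ENNReal.toReal_rpow, ← ENNReal.toReal_mul]
  have hofReal : (fun x => ENNReal.ofReal (f x ^ a * g x ^ b)) =ᵐ[μ]
      fun x => ENNReal.ofReal (f x) ^ a * ENNReal.ofReal (g x) ^ b := by
    filter_upwards [hf₀, hg₀] with x hfx hgx
    rw [ENNReal.ofReal_mul (rpow_nonneg hfx a), ENNReal.ofReal_rpow_of_nonneg hfx ha,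
      ENNReal.ofReal_rpow_of_nonneg hgx hb]
  rw [lintegral_congr_ae hofReal]
  refine ENNReal.toReal_mono ?_ (ENNReal.lintegral_mul_norm_pow_le
    hf.aemeasurable.ennreal_ofReal hg.aemeasurable.ennreal_ofReal ha hb hab)
  exact ENNReal.mul_ne_top (ENNReal.rpow_ne_top_of_nonneg ha hf.lintegral_lt_top.ne)
    (ENNReal.rpow_ne_top_of_nonneg hb hg.lintegral_lt_top.ne)

theorem ConvexOn.map_add_add_map_sub_le {s : Set ℝ} {f : ℝ → ℝ} (hf : ConvexOn ℝ s f)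
    {c x h : ℝ} (hs₁ : c + h ∈ s) (hs₂ : c - h ∈ s) (hx : |x| ≤ h) :
    f (c + x) + f (c - x) ≤ f (c + h) + f (c - h) := by
  obtain ⟨hxl, hxr⟩ := abs_le.1 hx
  rcases (abs_nonneg x).trans hx |>.eq_or_lt with rfl | hh
  · obtain rfl : x = 0 := by linarith
    simp
  have key : ∀ y : ℝ, |y| ≤ h → f (c + y) ≤
      (h + y) / (2 * h) * f (c + h) + (h - y) / (2 * h) * f (c - h) := by
    intro y hy
    obtain ⟨hyl, hyr⟩ := abs_le.1 hy
    have hcomb : c + y = ((h + y) / (2 * h)) • (c + h) + ((h - y) / (2 * h)) • (c - h) := by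
      simp only [smul_eq_mul]
      field_simp
      ring
    rw [hcomb]
    exact hf.2 hs₁ hs₂ (div_nonneg (by linarith) (by linarith))
      (div_nonneg (by linarith) (by linarith)) (by field_simp; ring)
  have h₁ := key x hx
  have h₂ := key (-x) (by rwa [abs_neg])
  rw [← sub_eq_add_neg] at h₂
  calc f (c + x) + f (c - x) ≤ _ := add_le_add h₁ h₂
    _ = f (c + h) + f (c - h) := by field_simp; ring

lemma norm_betaIntegral_integrand {u v : ℂ} {x : ℝ} (hx : x ∈ Ioo 0 1) :
    ‖(x : ℂ) ^ (u - 1) * (1 - (x : ℂ)) ^ (v - 1)‖ = x ^ (u.re - 1) * (1 - x) ^ (v.re - 1) := by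
  rw [norm_mul, ← Complex.ofReal_one, ← Complex.ofReal_sub,
    Complex.norm_cpow_eq_rpow_re_of_pos hx.1, Complex.norm_cpow_eq_rpow_re_of_pos (sub_pos.2 hx.2)]
  simp

lemma betaIntegral_ofReal (u v : ℝ) :
    Complex.betaIntegral u v = ((∫ x in (0 : ℝ)..1, x ^ (u - 1) * (1 - x) ^ (v - 1) : ℝ) : ℂ) := by
  rw [Complex.betaIntegral, ← intervalIntegral.integral_ofReal]
  refine intervalIntegral.integral_congr fun x hx => ?_
  rw [uIcc_of_le zero_le_one] at hx
  rw [Complex.ofReal_mul, Complex.ofReal_cpow hx.1, Complex.ofReal_cpow (sub_nonneg.2 hx.2)]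
  push_cast
  rfl

namespace ProbabilityTheory

lemma integrableOn_beta_integrand {u v : ℝ} (hu : 0 < u) (hv : 0 < v) :
    IntegrableOn (fun x : ℝ => x ^ (u - 1) * (1 - x) ^ (v - 1)) (Ioo 0 1) := by
  have h := Complex.betaIntegral_convergent (u := u) (v := v) (by simpa) (by simpa)
  rw [intervalIntegrable_iff_integrableOn_Ioo_of_le zero_le_one] at h
  refine IntegrableOn.congr_fun h.norm (fun x hx => ?_) measurableSet_Ioo
  simp only [norm_betaIntegral_integrand hx, Complex.ofReal_re]

lemma beta_eq_integral {u v : ℝ} (hu : 0 < u) (hv : 0 < v) :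
    beta u v = ∫ x in Ioo 0 1, x ^ (u - 1) * (1 - x) ^ (v - 1) := by
  rw [beta_eq_betaIntegralReal u v hu hv, betaIntegral_ofReal, Complex.ofReal_re,
    intervalIntegral.integral_of_le zero_le_one, integral_Ioc_eq_integral_Ioo]

lemma beta_add_one_left {u v : ℝ} (hu : u ≠ 0) (huv : u + v ≠ 0) :
    beta (u + 1) v = u / (u + v) * beta u v := by
  rw [beta, beta, add_right_comm, Gamma_add_one hu, Gamma_add_one huv]
  field_simp

lemma beta_antitoneOn_left {v : ℝ} (hv : 0 < v) :
    AntitoneOn (fun u => beta u v) (Ioi 0) := by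
  intro p hp q hq hpq
  show beta q v ≤ beta p v
  rw [beta_eq_integral hp hv, beta_eq_integral hq hv]
  refine setIntegral_mono_on (integrableOn_beta_integrand hq hv) (integrableOn_beta_integrand hp hv)
    measurableSet_Ioo fun x hx => ?_
  exact mul_le_mul_of_nonneg_right (rpow_le_rpow_of_exponent_ge hx.1 hx.2.le (by linarith))
    (rpow_nonneg (sub_pos.2 hx.2).le _)

lemma convexOn_log_beta_left {v : ℝ} (hv : 0 < v) :
    ConvexOn ℝ (Ioi 0) fun u => log (beta u v) := by
  refine convexOn_iff_forall_pos.mpr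
    ⟨convex_Ioi 0, fun p (hp : 0 < p) q (hq : 0 < q) a b ha hb hab => ?_⟩
  have hpq : 0 < a * p + b * q := by positivity
  have hholder : beta (a * p + b * q) v ≤ beta p v ^ a * beta q v ^ b := by
    rw [beta_eq_integral hp hv, beta_eq_integral hq hv, beta_eq_integral hpq hv]
    refine le_of_eq_of_le (setIntegral_congr_fun measurableSet_Ioo fun x hx => ?_)
      (integral_rpow_mul_rpow_le (integrableOn_beta_integrand hp hv)
        (integrableOn_beta_integrand hq hv) ?_ ?_ ha.le hb.le hab)
    · have hx₀ := hx.1.le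
      have hx₁ := (sub_pos.2 hx.2).le
      rw [mul_rpow (rpow_nonneg hx₀ _) (rpow_nonneg hx₁ _),
        mul_rpow (rpow_nonneg hx₀ _) (rpow_nonneg hx₁ _), ← rpow_mul hx₀, ← rpow_mul hx₀,
        ← rpow_mul hx₁, ← rpow_mul hx₁, mul_mul_mul_comm, ← rpow_add hx.1,
        ← rpow_add (sub_pos.2 hx.2)]
      congr 2
      · linear_combination hab
      · linear_combination (1 - v) * hab
    all_goals exact (ae_restrict_iff' measurableSet_Ioo).2 (ae_of_all _ fun x hx =>
      mul_nonneg (rpow_nonneg hx.1.le _) (rpow_nonneg (sub_pos.2 hx.2).le _))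
  have hp' := beta_pos hp hv
  have hq' := beta_pos hq hv
  simp only [smul_eq_mul]
  rw [← log_rpow hp', ← log_rpow hq',
    ← log_mul (rpow_pos_of_pos hp' a).ne' (rpow_pos_of_pos hq' b).ne']
  exact log_le_log (beta_pos hpq hv) hholder

lemma beta_add_mul_beta_sub_le {v c x h : ℝ} (hv : 0 < v) (hh : h < c) (hx : |x| ≤ h) :
    beta (c + x) v * beta (c - x) v ≤ beta (c + h) v * beta (c - h) v := by
  obtain ⟨hxl, hxr⟩ := abs_le.1 hx
  have h₁ := beta_pos (by linarith : 0 < c + x) hv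
  have h₂ := beta_pos (by linarith : 0 < c - x) hv
  have h₃ := beta_pos (by linarith : 0 < c + h) hv
  have h₄ := beta_pos (by linarith : 0 < c - h) hv
  have hlog := (convexOn_log_beta_left hv).map_add_add_map_sub_le
    (mem_Ioi.2 (by linarith : 0 < c + h)) (mem_Ioi.2 (by linarith : 0 < c - h)) hx
  rwa [← log_mul h₁.ne' h₂.ne', ← log_mul h₃.ne' h₄.ne',
    log_le_log_iff (mul_pos h₁ h₂) (mul_pos h₃ h₄)] at hlog

lemma beta_add_one_add_mul_beta_add_lt {s d t v : ℝ} (hs : 0 < s) (hd : 0 < d)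
    (ht : 0 ≤ t) (hv : 0 < v) :
    beta (s + 1 + t) v * beta (s + d + t) v <
      (s + d) / (s + d + v) * (beta (s + d) v * beta s v) := by
  have h₁ : beta (s + 1 + t) v ≤ beta (s + 1) v :=
    beta_antitoneOn_left hv (mem_Ioi.2 (by linarith)) (mem_Ioi.2 (by linarith)) (by linarith)
  have h₂ : beta (s + d + t) v ≤ beta (s + d) v :=
    beta_antitoneOn_left hv (mem_Ioi.2 (by linarith)) (mem_Ioi.2 (by linarith)) (by linarith)
  have hratio : s / (s + v) < (s + d) / (s + d + v) := by
    rw [div_lt_div_iff₀ (by linarith) (by linarith)]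
    nlinarith
  calc beta (s + 1 + t) v * beta (s + d + t) v ≤ beta (s + 1) v * beta (s + d) v :=
        mul_le_mul h₁ h₂ (beta_pos (by linarith) hv).le (beta_pos (by linarith) hv).le
    _ = s / (s + v) * (beta (s + d) v * beta s v) := by
        rw [beta_add_one_left hs.ne' (by linarith)]
        ring
    _ < (s + d) / (s + d + v) * (beta (s + d) v * beta s v) := by
        gcongr
        exact mul_pos (beta_pos (by linarith) hv) (beta_pos hs hv)

lemma norm_betaIntegral_le_beta {u v : ℂ} (hu : 0 < u.re) (hv : 0 < v.re) :
    ‖Complex.betaIntegral u v‖ ≤ beta u.re v.re := by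
  refine (intervalIntegral.norm_integral_le_integral_norm zero_le_one).trans_eq ?_
  rw [beta_eq_integral hu hv, intervalIntegral.integral_of_le zero_le_one,
    integral_Ioc_eq_integral_Ioo]
  exact setIntegral_congr_fun measurableSet_Ioo fun x hx => norm_betaIntegral_integrand hx

lemma Gamma_add_mul_Gamma_add_div {u₁ u₂ v : ℝ} (hu₁ : 0 < u₁) (hu₂ : 0 < u₂) (hv : 0 < v) :
    Gamma (u₁ + v) * Gamma (u₂ + v) / (Gamma u₁ * Gamma u₂) =
      Gamma v ^ 2 / (beta u₁ v * beta u₂ v) := by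
  have := Gamma_pos_of_pos hu₁
  have := Gamma_pos_of_pos hu₂
  have := Gamma_pos_of_pos hv
  have := Gamma_pos_of_pos (add_pos hu₁ hv)
  have := Gamma_pos_of_pos (add_pos hu₂ hv)
  simp only [beta]
  field_simp

lemma Gamma_div_beta_le_norm_Gamma_add_div {z : ℂ} {v : ℝ} (hz : 0 < z.re) (hv : 0 < v) :
    Gamma v / beta z.re v ≤ ‖Complex.Gamma (z + v)‖ / ‖Complex.Gamma z‖ := by
  have hΓz : 0 < ‖Complex.Gamma z‖ := norm_pos_iff.2 (Complex.Gamma_ne_zero_of_re_pos hz)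
  have hβ := congrArg norm (Complex.Gamma_mul_Gamma_eq_betaIntegral hz (t := v) (by simpa))
  rw [norm_mul, norm_mul, Complex.Gamma_ofReal, Complex.norm_real,
    Real.norm_of_nonneg (Gamma_pos_of_pos hv).le] at hβ
  have hle := norm_betaIntegral_le_beta hz (v := v) (by simpa)
  rw [Complex.ofReal_re] at hle
  rw [div_le_div_iff₀ (beta_pos hz hv) hΓz, mul_comm, hβ]
  exact mul_le_mul_of_nonneg_left hle (norm_nonneg _)

end ProbabilityTheory

lemma ThetaI_eq {γ a β : ℝ} (hγ : 0 < γ) (h₁ : 0 < (1 - γ + a + β) / 2)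
    (h₂ : 0 < (1 - γ + a - β) / 2) :
    ThetaI γ a β = 4 ^ γ * Gamma γ ^ 2 /
      (beta ((1 - γ + a + β) / 2) γ * beta ((1 - γ + a - β) / 2) γ) := by
  rw [ThetaI, show (1 + γ + a + β) / 2 = (1 - γ + a + β) / 2 + γ by ring,
    show (1 + γ + a - β) / 2 = (1 - γ + a - β) / 2 + γ by ring, mul_assoc, mul_div_assoc,
    Gamma_add_mul_Gamma_add_div h₁ h₂ hγ, mul_div_assoc]

lemma Qcurv_eq {n : ℤ} {γ : ℝ} (hγ : 0 < γ) (hγn : γ < (n : ℝ) / 2 - 1) :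
    Qcurv n γ = 4 ^ γ * Gamma γ ^ 2 /
      (beta (((n : ℝ) - 2 * γ) / 4) γ * beta (((n : ℝ) - 2 - 2 * γ) / 4) γ) := by
  rw [Qcurv, show ((n : ℝ) + 2 * γ) / 4 = ((n : ℝ) - 2 * γ) / 4 + γ by ring,
    show ((n : ℝ) - 2 + 2 * γ) / 4 = ((n : ℝ) - 2 - 2 * γ) / 4 + γ by ring, mul_assoc,
    mul_div_assoc, Gamma_add_mul_Gamma_add_div (by linarith) (by linarith) hγ, mul_div_assoc]

lemma le_ThetaR {γ a b : ℝ} (hγ : 0 < γ) (hA : 0 < (1 - γ + a) / 2) :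
    4 ^ γ * Gamma γ ^ 2 / beta ((1 - γ + a) / 2) γ ^ 2 ≤ ThetaR γ a b := by
  have hle := Gamma_div_beta_le_norm_Gamma_add_div
    (z := ((1 - γ + a) / 2 : ℝ) + (b / 2 : ℝ) * Complex.I) (by simpa using hA) hγ
  have hshift : (((1 + γ + a) / 2 : ℝ) : ℂ) + (b / 2 : ℝ) * Complex.I =
      ((1 - γ + a) / 2 : ℝ) + (b / 2 : ℝ) * Complex.I + γ := by
    push_cast
    ring
  simp only [Complex.add_re, Complex.ofReal_re, Complex.mul_re, Complex.I_re, Complex.I_im,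
    Complex.ofReal_im, mul_zero, zero_mul, sub_zero, add_zero] at hle
  have h₀ : 0 ≤ Gamma γ / beta ((1 - γ + a) / 2) γ :=
    div_nonneg (Gamma_pos_of_pos hγ).le (beta_pos hA hγ).le
  rw [ThetaR, hshift, mul_div_assoc, ← div_pow, mul_div_assoc, ← div_pow]
  exact mul_le_mul_of_nonneg_left (pow_le_pow_left₀ h₀ hle 2) (by positivity)

lemma le_T_one {γ a lam : ℝ} (hγ : 0 < γ) (hA : 1 / 4 < (1 - γ + a) / 2) (hlam : 0 ≤ lam) :
    4 ^ γ * Gamma γ ^ 2 /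
        (beta ((1 - γ + a) / 2 + 1 / 4) γ * beta ((1 - γ + a) / 2 - 1 / 4) γ) ≤
      T γ 1 a lam := by
  have hK : 0 ≤ (4 : ℝ) ^ γ * Gamma γ ^ 2 := by positivity
  rw [T, Int.cast_one, one_pow]
  split_ifs with hlam'
  · set β := √(1 / 4 - lam)
    have hβ₀ : 0 ≤ β := sqrt_nonneg _
    have hβ₁ : β ≤ 1 / 2 := (sqrt_le_left (by norm_num)).2 (by linarith)
    have hβ : |β / 2| ≤ 1 / 4 := abs_le.2 ⟨by linarith, by linarith⟩
    rw [ThetaI_eq hγ (by linarith) (by linarith),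
      show (1 - γ + a + β) / 2 = (1 - γ + a) / 2 + β / 2 by ring,
      show (1 - γ + a - β) / 2 = (1 - γ + a) / 2 - β / 2 by ring]
    exact div_le_div_of_nonneg_left hK
      (mul_pos (beta_pos (by linarith) hγ) (beta_pos (by linarith) hγ))
      (beta_add_mul_beta_sub_le hγ hA hβ)
  · refine le_trans ?_ (le_ThetaR hγ (by linarith))
    have hx := beta_add_mul_beta_sub_le (x := 0) hγ hA (by norm_num)
    rw [add_zero, sub_zero, ← sq] at hx
    exact div_le_div_of_nonneg_left hK (pow_pos (beta_pos (by linarith) hγ) 2) hx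

theorem stmt7_general (n : ℤ) (γ : ℝ) (hγ : 0 < γ) (hγn : γ < (n : ℝ) / 2 - 1) :
    ∀ m : ℤ, 1 ≤ m → ∀ lam : ℝ, 0 ≤ lam →
      (((n : ℝ) + 2 * γ) / ((n : ℝ) - 2 * γ)) * Qcurv n γ <
        T γ 1 ((m : ℝ) + ((n : ℝ) - 3) / 2) lam := by
  intro m hm lam hlam
  have hm' : (1 : ℝ) ≤ m := by exact_mod_cast hm
  obtain ⟨s, hs_def⟩ : ∃ s : ℝ, ((n : ℝ) - 2 - 2 * γ) / 4 = s := ⟨_, rfl⟩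
  have hs : 0 < s := by linarith
  have hQ : ((n : ℝ) + 2 * γ) / ((n : ℝ) - 2 * γ) * Qcurv n γ =
      4 ^ γ * Gamma γ ^ 2 / ((s + 1 / 2) / (s + 1 / 2 + γ) * (beta (s + 1 / 2) γ * beta s γ)) := by
    rw [Qcurv_eq hγ hγn, show ((n : ℝ) - 2 * γ) / 4 = s + 1 / 2 by linarith, hs_def,
      show (n : ℝ) + 2 * γ = 4 * (s + 1 / 2 + γ) by linarith,
      show (n : ℝ) - 2 * γ = 4 * (s + 1 / 2) by linarith]
    have := beta_pos (by linarith : 0 < s + 1 / 2) hγ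
    have := beta_pos hs hγ
    field_simp
  have hA₁ : (1 - γ + ((m : ℝ) + ((n : ℝ) - 3) / 2)) / 2 + 1 / 4 = s + 1 + (m - 1) / 2 := by
    linarith
  have hA₂ : (1 - γ + ((m : ℝ) + ((n : ℝ) - 3) / 2)) / 2 - 1 / 4 = s + 1 / 2 + (m - 1) / 2 := by
    linarith
  calc ((n : ℝ) + 2 * γ) / ((n : ℝ) - 2 * γ) * Qcurv n γ = _ := hQ
    _ < 4 ^ γ * Gamma γ ^ 2 /
          (beta (s + 1 + (m - 1) / 2) γ * beta (s + 1 / 2 + (m - 1) / 2) γ) :=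
        div_lt_div_of_pos_left (by positivity)
          (mul_pos (beta_pos (by linarith) hγ) (beta_pos (by linarith) hγ))
          (beta_add_one_add_mul_beta_add_lt hs one_half_pos (by linarith) hγ)
    _ ≤ T γ 1 ((m : ℝ) + ((n : ℝ) - 3) / 2) lam := by
        rw [← hA₁, ← hA₂]
        exact le_T_one hγ (by linarith) hlam

theorem stmt7 (n : ℤ) (hn : 4 ≤ n) (γ : ℝ) (hγ : 0 < γ) (hγn : γ < (n : ℝ) / 2 - 1) :
    ∀ m : ℤ, 1 ≤ m → ∀ lam : ℝ, 0 ≤ lam →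
      (((n : ℝ) + 2 * γ) / ((n : ℝ) - 2 * γ)) * Qcurv n γ <
        T γ 1 ((m : ℝ) + ((n : ℝ) - 3) / 2) lam :=
  stmt7_general n γ hγ hγn
end

section
/- Let n ≥ 4 be an integer and let γ be a real number with 0 < γ < n/2 − 1; set a₀ = (n−3)/2. Then for every real ϑ with ϑ > Ξ(n,γ), there exists a unique real λ > 1/4 such that T(γ,1,a₀,λ) = ϑ. -/
/-- `Ξ(n,γ) = 4^γ · Γ(n/4+γ/2−1/4)² / Γ(n/4−γ/2−1/4)²`. -/
noncomputable def Xi (n : ℤ) (γ : ℝ) : ℝ :=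
  (4 : ℝ) ^ γ * Real.Gamma ((n : ℝ) / 4 + γ / 2 - 1 / 4) ^ 2 /
    Real.Gamma ((n : ℝ) / 4 - γ / 2 - 1 / 4) ^ 2


/-!
For `λ > 1/4` the symbol is `4^γ |Γ(p + it)|² / |Γ(q + it)|²` with `t = √(λ - 1/4) / 2` and
`p - q = γ > 0`. Gauss's product formula writes this ratio of
`|Γ|²` as the limit of `n^{2(p-q)} ∏_{k ≤ n} ((q+k)² + t²) / ((p+k)² + t²)`. Each factor increases
strictly with `t²`, so the ratio is strictly increasing in `t ≥ 0`. Each factor also tends to `1`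
as `t → ∞`, while the product of the factors at `t = 0` tends to `0` (it is about
`Γ(p)²/Γ(q)² · n^{-2(p-q)}`); comparing with finitely many factors shows the ratio is unbounded.
The intermediate value theorem then gives existence, and strict monotonicity gives uniqueness.
-/

open Complex Filter Finset Topology
open scoped Nat

theorem existsUnique_eq_of_strictMonoOn_Ici {α δ : Type*} [ConditionallyCompleteLinearOrder α]
    [DenselyOrdered α] [TopologicalSpace α] [OrderTopology α] [LinearOrder δ] [TopologicalSpace δ]
    [OrderClosedTopology δ] {f : α → δ} {a : α} {c : δ} (hcont : ContinuousOn f (Set.Ici a))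
    (hmono : StrictMonoOn f (Set.Ici a)) (htop : Tendsto f atTop atTop) (hc : f a < c) :
    ∃! x, a < x ∧ f x = c := by
  obtain ⟨b, hcb, hab⟩ := ((htop.eventually_ge_atTop c).and (eventually_ge_atTop a)).exists
  obtain ⟨x, hx, rfl⟩ :=
    intermediate_value_Icc hab (hcont.mono Set.Icc_subset_Ici_self) ⟨hc.le, hcb⟩
  refine ⟨x, ⟨hx.1.lt_of_ne ?_, rfl⟩, fun y hy => hmono.injOn hy.1.le hx.1 hy.2⟩
  rintro rfl
  exact hc.false

namespace Complex

lemma Gamma_ofReal_add_mul_I_ne_zero {s : ℝ} (hs : 0 < s) (t : ℝ) : Gamma (s + t * I) ≠ 0 :=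
  Gamma_ne_zero_of_re_pos (by simpa using hs)

lemma continuous_Gamma_ofReal_add_mul_I {s : ℝ} (hs : 0 < s) :
    Continuous fun t : ℝ => Gamma (s + t * I) := by
  refine continuous_iff_continuousAt.2 fun t => ContinuousAt.comp ?_ (by fun_prop)
  refine (differentiableAt_Gamma _ fun m h => ?_).continuousAt
  have := congrArg re h
  simp only [add_re, ofReal_re, mul_re, ofReal_im, I_re, I_im, mul_zero, mul_one, sub_self,
    add_zero, neg_re, natCast_re] at this
  linarith [m.cast_nonneg (α := ℝ)]

lemma sq_norm_GammaSeq_ofReal_add_mul_I (s t : ℝ) {n : ℕ} (hn : n ≠ 0) :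
    ‖GammaSeq (s + t * I) n‖ ^ 2 =
      ((n : ℝ) ^ s) ^ 2 * (n ! : ℝ) ^ 2 / ∏ j ∈ range (n + 1), ((s + j) ^ 2 + t ^ 2) := by
  rw [GammaSeq, norm_div, norm_mul, div_pow, mul_pow, norm_prod, ← prod_pow,
    ← ofReal_natCast, norm_cpow_eq_rpow_re_of_pos (by positivity)]
  congr 2
  · simp
  · simp
  · ext j
    rw [Complex.sq_norm, show (s : ℂ) + t * I + j = ((s + j : ℝ) : ℂ) + t * I by push_cast; ring,
      normSq_add_mul_I]

end Complex

noncomputable def gammaNormSqRatio (p q t : ℝ) : ℝ :=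
  ‖Gamma (p + t * I)‖ ^ 2 / ‖Gamma (q + t * I)‖ ^ 2

noncomputable def gaussFactor (p q t : ℝ) (k : ℕ) : ℝ :=
  ((q + k) ^ 2 + t ^ 2) / ((p + k) ^ 2 + t ^ 2)

variable {p q : ℝ}

lemma gammaNormSqRatio_pos (hp : 0 < p) (hq : 0 < q) (t : ℝ) : 0 < gammaNormSqRatio p q t := by
  have := Gamma_ofReal_add_mul_I_ne_zero hp t
  have := Gamma_ofReal_add_mul_I_ne_zero hq t
  unfold gammaNormSqRatio
  positivity

lemma continuous_gammaNormSqRatio (hp : 0 < p) (hq : 0 < q) : Continuous (gammaNormSqRatio p q) :=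
  ((continuous_Gamma_ofReal_add_mul_I hp).norm.pow 2).div
    ((continuous_Gamma_ofReal_add_mul_I hq).norm.pow 2)
    fun t => pow_ne_zero 2 (norm_ne_zero_iff.2 (Gamma_ofReal_add_mul_I_ne_zero hq t))

lemma gammaNormSqRatio_zero :
    gammaNormSqRatio p q 0 = Real.Gamma p ^ 2 / Real.Gamma q ^ 2 := by
  simp only [gammaNormSqRatio, ofReal_zero, zero_mul, add_zero, Gamma_ofReal, norm_real,
    Real.norm_eq_abs, sq_abs]

lemma gaussFactor_pos (hp : 0 < p) (hq : 0 < q) (t : ℝ) (k : ℕ) : 0 < gaussFactor p q t k := by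
  unfold gaussFactor
  positivity

lemma gaussFactor_le_gaussFactor (hq : 0 < q) (hpq : q ≤ p) {t₁ t₂ : ℝ} (ht : t₁ ^ 2 ≤ t₂ ^ 2)
    (k : ℕ) : gaussFactor p q t₁ k ≤ gaussFactor p q t₂ k := by
  have hqk : 0 < q + k := by positivity
  have hpk : 0 < p + k := by linarith
  have hk : (q + k) ^ 2 ≤ (p + k) ^ 2 := by gcongr
  unfold gaussFactor
  rw [div_le_div_iff₀ (by positivity) (by positivity)]
  nlinarith [mul_nonneg (sub_nonneg.2 ht) (sub_nonneg.2 hk)]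

lemma gaussFactor_lt_gaussFactor (hq : 0 < q) (hpq : q < p) {t₁ t₂ : ℝ} (ht : t₁ ^ 2 < t₂ ^ 2)
    (k : ℕ) : gaussFactor p q t₁ k < gaussFactor p q t₂ k := by
  have hqk : 0 < q + k := by positivity
  have hpk : 0 < p + k := by linarith
  have hk : (q + k) ^ 2 < (p + k) ^ 2 := by gcongr
  unfold gaussFactor
  rw [div_lt_div_iff₀ (by positivity) (by positivity)]
  nlinarith [mul_pos (sub_pos.2 ht) (sub_pos.2 hk)]

lemma tendsto_gaussFactor_atTop (k : ℕ) : Tendsto (gaussFactor p q · k) atTop (𝓝 1) := by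
  have hden : Tendsto (fun t : ℝ => (p + k) ^ 2 + t ^ 2) atTop atTop :=
    tendsto_atTop_add_const_left _ _ (tendsto_pow_atTop two_ne_zero)
  have hlim := (tendsto_const_nhds (x := ((q + k) ^ 2 - (p + k) ^ 2))).div_atTop hden
  rw [← add_zero 1]
  refine (tendsto_const_nhds.add hlim).congr' ((eventually_gt_atTop 0).mono fun t ht => ?_)
  have : 0 < (p + k) ^ 2 + t ^ 2 := by positivity
  simp only [gaussFactor]
  field_simp
  ring

lemma tendsto_rpow_mul_prod_gaussFactor (hp : 0 < p) (hq : 0 < q) (t : ℝ) :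
    Tendsto (fun n : ℕ => (n : ℝ) ^ (2 * (p - q)) * ∏ k ∈ range (n + 1), gaussFactor p q t k)
      atTop (𝓝 (gammaNormSqRatio p q t)) := by
  have hlim := ((GammaSeq_tendsto_Gamma (p + t * I)).norm.pow 2).div
    ((GammaSeq_tendsto_Gamma (q + t * I)).norm.pow 2)
    (pow_ne_zero 2 (norm_ne_zero_iff.2 (Gamma_ofReal_add_mul_I_ne_zero hq t)))
  refine hlim.congr' ((eventually_ne_atTop 0).mono fun n hn => ?_)
  simp only [Pi.div_apply]
  have hn' : (0 : ℝ) < n := by positivity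
  rw [sq_norm_GammaSeq_ofReal_add_mul_I _ _ hn, sq_norm_GammaSeq_ofReal_add_mul_I _ _ hn,
    mul_comm 2, Real.rpow_mul hn'.le, Real.rpow_two, Real.rpow_sub hn']
  simp only [gaussFactor, prod_div_distrib]
  have : 0 < ∏ j ∈ range (n + 1), ((p + j) ^ 2 + t ^ 2) := prod_pos fun j _ => by positivity
  have : 0 < ∏ j ∈ range (n + 1), ((q + j) ^ 2 + t ^ 2) := prod_pos fun j _ => by positivity
  have := Real.rpow_pos_of_pos hn' q
  field_simp

lemma gammaNormSqRatio_mul_prod_le (hq : 0 < q) (hpq : q ≤ p) {t₁ t₂ : ℝ} (ht : t₁ ^ 2 ≤ t₂ ^ 2)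
    (N : ℕ) :
    gammaNormSqRatio p q t₁ * ∏ k ∈ range N, gaussFactor p q t₂ k / gaussFactor p q t₁ k ≤
      gammaNormSqRatio p q t₂ := by
  have hp : 0 < p := hq.trans_le hpq
  have hg := gaussFactor_pos hp hq
  have hratio : ∀ k, 1 ≤ gaussFactor p q t₂ k / gaussFactor p q t₁ k := fun k =>
    (one_le_div (hg t₁ k)).2 (gaussFactor_le_gaussFactor hq hpq ht k)
  refine le_of_tendsto_of_tendsto ((tendsto_rpow_mul_prod_gaussFactor hp hq t₁).mul_const _)
    (tendsto_rpow_mul_prod_gaussFactor hp hq t₂) ?_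
  filter_upwards [eventually_ge_atTop N] with n hn
  have hsplit : ∏ k ∈ range (n + 1), gaussFactor p q t₂ k =
      (∏ k ∈ range (n + 1), gaussFactor p q t₁ k) *
        ∏ k ∈ range (n + 1), gaussFactor p q t₂ k / gaussFactor p q t₁ k := by
    rw [← prod_mul_distrib]
    exact prod_congr rfl fun k _ => (mul_div_cancel₀ _ (hg t₁ k).ne').symm
  rw [hsplit, mul_assoc]
  gcongr _ * (_ * ?_)
  · exact prod_nonneg fun k _ => (hg t₁ k).le
  · exact prod_le_prod_of_subset_of_one_le (range_subset_range.2 (by omega))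
      (fun k _ => zero_le_one.trans (hratio k)) fun k _ _ => hratio k

lemma strictMonoOn_gammaNormSqRatio (hq : 0 < q) (hpq : q < p) :
    StrictMonoOn (gammaNormSqRatio p q) (Set.Ici 0) := by
  intro t₁ ht₁ t₂ _ ht
  have hp := hq.trans hpq
  have hsq : t₁ ^ 2 < t₂ ^ 2 := by gcongr
  have h := gammaNormSqRatio_mul_prod_le hq hpq.le hsq.le 1
  rw [prod_range_one] at h
  have h1 : 1 < gaussFactor p q t₂ 0 / gaussFactor p q t₁ 0 :=
    (one_lt_div (gaussFactor_pos hp hq t₁ 0)).2 (gaussFactor_lt_gaussFactor hq hpq hsq 0)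
  exact (lt_mul_of_one_lt_right (gammaNormSqRatio_pos hp hq t₁) h1).trans_le h

lemma tendsto_prod_gaussFactor_zero (hq : 0 < q) (hpq : q < p) :
    Tendsto (fun n : ℕ => ∏ k ∈ range (n + 1), gaussFactor p q 0 k) atTop (𝓝 0) := by
  have hp := hq.trans hpq
  have hpow : Tendsto (fun n : ℕ => (n : ℝ) ^ (2 * (p - q))) atTop atTop :=
    (tendsto_rpow_atTop (by linarith)).comp tendsto_natCast_atTop_atTop
  refine ((tendsto_rpow_mul_prod_gaussFactor hp hq 0).div_atTop hpow).congr'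
    ((eventually_ne_atTop 0).mono fun n hn => ?_)
  exact mul_div_cancel_left₀ _ (by positivity)

lemma tendsto_gammaNormSqRatio_atTop (hq : 0 < q) (hpq : q < p) :
    Tendsto (gammaNormSqRatio p q) atTop atTop := by
  have hp := hq.trans hpq
  have hg0 := gaussFactor_pos hp hq 0
  have hbound : Tendsto (fun N : ℕ => gammaNormSqRatio p q 0 *
      (∏ k ∈ range (N + 1), gaussFactor p q 0 k)⁻¹) atTop atTop :=
    ((tendsto_nhdsWithin_iff.2 ⟨tendsto_prod_gaussFactor_zero hq hpq, .of_forall fun N =>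
      prod_pos fun k _ => hg0 k⟩).inv_tendsto_nhdsGT_zero).const_mul_atTop
      (gammaNormSqRatio_pos hp hq 0)
  refine tendsto_atTop.2 fun M => ?_
  obtain ⟨N, hN⟩ := (hbound.eventually_gt_atTop M).exists
  have hlim : Tendsto (fun t => gammaNormSqRatio p q 0 *
      ∏ k ∈ range (N + 1), gaussFactor p q t k / gaussFactor p q 0 k) atTop
      (𝓝 (gammaNormSqRatio p q 0 * (∏ k ∈ range (N + 1), gaussFactor p q 0 k)⁻¹)) := by
    rw [← prod_inv_distrib]
    refine (tendsto_finsetProd _ fun k _ => ?_).const_mul _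
    simpa using (tendsto_gaussFactor_atTop k).div_const (gaussFactor p q 0 k)
  filter_upwards [hlim.eventually (lt_mem_nhds hN)] with t ht
  exact ht.le.trans (gammaNormSqRatio_mul_prod_le hq hpq.le (by simp [sq_nonneg]) _)

lemma T_of_sq_div_four_lt (γ : ℝ) (k : ℤ) (a : ℝ) {lam : ℝ} (h : (k : ℝ) ^ 2 / 4 < lam) :
    T γ k a lam = 4 ^ γ *
      gammaNormSqRatio ((1 + γ + a) / 2) ((1 - γ + a) / 2) (√(lam - (k : ℝ) ^ 2 / 4) / 2) := by
  rw [T, if_neg h.not_ge, ThetaR, gammaNormSqRatio, mul_div_assoc]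

lemma existsUnique_T_one_eq {γ a ϑ : ℝ} (hγ : 0 < γ) (hγa : γ < 1 + a)
    (hϑ : 4 ^ γ * Real.Gamma ((1 + γ + a) / 2) ^ 2 / Real.Gamma ((1 - γ + a) / 2) ^ 2 < ϑ) :
    ∃! lam : ℝ, 1 / 4 < lam ∧ T γ 1 a lam = ϑ := by
  have hq : 0 < (1 - γ + a) / 2 := by linarith
  have hpq : (1 - γ + a) / 2 < (1 + γ + a) / 2 := by linarith
  set p := (1 + γ + a) / 2
  set q := (1 - γ + a) / 2
  have h4 : (0 : ℝ) < 4 ^ γ := by positivity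
  let F : ℝ → ℝ := fun lam => 4 ^ γ * gammaNormSqRatio p q (√(lam - 1 / 4) / 2)
  have hFmono : StrictMonoOn F (Set.Ici (1 / 4)) := fun x hx y _ hxy =>
    mul_lt_mul_of_pos_left (strictMonoOn_gammaNormSqRatio hq hpq (Set.mem_Ici.2 (by positivity))
      (Set.mem_Ici.2 (by positivity)) (by gcongr; exact sub_nonneg.2 hx)) h4
  have hFcont : Continuous F := by
    have := continuous_gammaNormSqRatio (hq.trans hpq) hq
    fun_prop
  have hFtop : Tendsto F atTop atTop :=
    ((tendsto_gammaNormSqRatio_atTop hq hpq).comp ((Real.tendsto_sqrt_atTop.comp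
      (tendsto_atTop_add_const_right _ _ tendsto_id)).atTop_div_const two_pos)).const_mul_atTop h4
  have hF : F (1 / 4) < ϑ := by
    simpa only [F, sub_self, Real.sqrt_zero, zero_div, gammaNormSqRatio_zero, mul_div_assoc]
      using hϑ
  refine (existsUnique_congr fun lam => and_congr_right fun h => ?_).2
    (existsUnique_eq_of_strictMonoOn_Ici hFcont.continuousOn hFmono hFtop hF)
  rw [T_of_sq_div_four_lt γ 1 a (by simpa using h), Int.cast_one, one_pow]

theorem stmt10_general (n : ℤ) (γ : ℝ) (hγ : 0 < γ) (hγn : γ < (n : ℝ) / 2 - 1) :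
    ∀ ϑ : ℝ, Xi n γ < ϑ →
      ∃! lam : ℝ, 1 / 4 < lam ∧ T γ 1 (((n : ℝ) - 3) / 2) lam = ϑ := by
  intro ϑ hϑ
  refine existsUnique_T_one_eq hγ (by linarith) ?_
  rw [Xi] at hϑ
  convert hϑ using 5 <;> ring

theorem stmt10 (n : ℤ) (hn : 4 ≤ n) (γ : ℝ) (hγ : 0 < γ) (hγn : γ < (n : ℝ) / 2 - 1) :
    ∀ ϑ : ℝ, Xi n γ < ϑ →
      ∃! lam : ℝ, 1 / 4 < lam ∧ T γ 1 (((n : ℝ) - 3) / 2) lam = ϑ :=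
  stmt10_general n γ hγ hγn
end

section
/- For every real γ with 0 < γ < 1/2, one has Ξ(3,γ) ≥ ((3+2γ)/(3−2γ)) · Q(3,γ), where Ξ(3,γ) = 4^γ · Γ(3/4+γ/2−1/4)² / Γ(3/4−γ/2−1/4)² and Q(3,γ) = 4^γ · Γ((3+2γ)/4) · Γ((1+2γ)/4) / (Γ((3−2γ)/4) · Γ((1−2γ)/4)). That is, for n = 3 the inequality Ξ(n,γ) < ((n+2γ)/(n−2γ)) · Q(n,γ) fails for all 0 < γ < 1/2. -/
/-!
By the duplication formula the left side is `(3+2γ)/(3-2γ) · Γ(1/2+γ)/Γ(1/2-γ)`, and the right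
side is `4^γ (Γ(1/2+γ/2)/Γ(1/2-γ/2))²`. Comparing Gauss's products for `Γ` factor by factor, via
`(b-t)(b+t/2)² ≤ (b+t)(b-t/2)²`, gives `Γ(s+t)/Γ(s-t) ≤ (Γ(s+t/2)/Γ(s-t/2))²` for `0 ≤ t < s`.
Used at `s = 1/2` this would leave `(3+2γ)/(3-2γ) ≤ 4^γ`, which is an equality at `γ = 1/2`;
used at `s = 3/2` and pulled back by `Γ(x+1) = xΓ(x)`, it leaves an elementary inequality with
room to spare, which follows from `4^γ ≥ 1 + γ log 4`.
-/

open Real Filter Finset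
open scoped Nat

lemma sub_mul_add_half_sq_le {b t : ℝ} (ht : 0 ≤ t) :
    (b - t) * (b + t / 2) ^ 2 ≤ (b + t) * (b - t / 2) ^ 2 := by
  have hdiff : (b + t) * (b - t / 2) ^ 2 - (b - t) * (b + t / 2) ^ 2 = t ^ 3 / 2 := by ring
  linarith [pow_nonneg ht 3]

lemma GammaSeq_mul_GammaSeq_sq (a b : ℝ) {n : ℕ} (hn : n ≠ 0) :
    GammaSeq a n * GammaSeq b n ^ 2 = (n : ℝ) ^ (a + 2 * b) * (n ! : ℝ) ^ 3 /
      ((∏ j ∈ range (n + 1), (a + j)) * (∏ j ∈ range (n + 1), (b + j)) ^ 2) := by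
  have hn' : (0 : ℝ) < n := by positivity
  rw [GammaSeq, GammaSeq, two_mul, rpow_add hn', rpow_add hn']
  ring

lemma GammaSeq_mul_GammaSeq_sq_le {s t : ℝ} (hts : t < s) (ht : 0 ≤ t) {n : ℕ} (hn : n ≠ 0) :
    GammaSeq (s + t) n * GammaSeq (s - t / 2) n ^ 2 ≤
      GammaSeq (s - t) n * GammaSeq (s + t / 2) n ^ 2 := by
  have hpos : ∀ x, 0 < x → 0 < ∏ j ∈ range (n + 1), (x + (j : ℝ)) := fun x hx =>
    prod_pos fun j _ => by positivity
  rw [GammaSeq_mul_GammaSeq_sq _ _ hn, GammaSeq_mul_GammaSeq_sq _ _ hn,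
    show s + t + 2 * (s - t / 2) = s - t + 2 * (s + t / 2) by ring]
  refine div_le_div_of_nonneg_left (by positivity)
    (mul_pos (hpos _ (by linarith)) (pow_pos (hpos _ (by linarith)) 2)) ?_
  rw [← prod_pow, ← prod_pow, ← prod_mul_distrib, ← prod_mul_distrib]
  refine prod_le_prod (fun j _ => ?_) (fun j _ => ?_)
  · have : 0 ≤ s - t + j := by positivity
    positivity
  · calc (s - t + j) * (s + t / 2 + j) ^ 2 = (s + j - t) * (s + j + t / 2) ^ 2 := by ring
      _ ≤ (s + j + t) * (s + j - t / 2) ^ 2 := sub_mul_add_half_sq_le ht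
      _ = (s + t + j) * (s - t / 2 + j) ^ 2 := by ring

lemma Gamma_mul_Gamma_sq_le {s t : ℝ} (hts : t < s) (ht : 0 ≤ t) :
    Gamma (s + t) * Gamma (s - t / 2) ^ 2 ≤ Gamma (s - t) * Gamma (s + t / 2) ^ 2 :=
  le_of_tendsto_of_tendsto
    ((GammaSeq_tendsto_Gamma _).mul ((GammaSeq_tendsto_Gamma _).pow 2))
    ((GammaSeq_tendsto_Gamma _).mul ((GammaSeq_tendsto_Gamma _).pow 2))
    (eventually_atTop.2 ⟨1, fun _ hn => GammaSeq_mul_GammaSeq_sq_le hts ht (by omega)⟩)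

lemma Gamma_add_one_div_Gamma_add_one {x y : ℝ} (hx : x ≠ 0) (hy : y ≠ 0) :
    Gamma (x + 1) / Gamma (y + 1) = x / y * (Gamma x / Gamma y) := by
  rw [Gamma_add_one hx, Gamma_add_one hy, mul_div_mul_comm]

lemma Gamma_mul_Gamma_add_half_div (a b : ℝ) :
    Gamma a * Gamma (a + 1 / 2) / (Gamma b * Gamma (b + 1 / 2)) =
      (4 : ℝ) ^ (b - a) * (Gamma (2 * a) / Gamma (2 * b)) := by
  have h4 : (4 : ℝ) ^ (b - a) = 2 ^ (1 - 2 * a) / 2 ^ (1 - 2 * b) := by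
    rw [← rpow_sub two_pos, show (4 : ℝ) = 2 ^ (2 : ℝ) by norm_num, ← rpow_mul zero_le_two]
    ring_nf
  rw [Gamma_mul_Gamma_add_half, Gamma_mul_Gamma_add_half, h4, div_mul_div_comm,
    mul_div_mul_right _ _ (sqrt_pos.2 pi_pos).ne']
  ring

lemma Gamma_div_Gamma_le {s t : ℝ} (hts : t < s) (ht : 0 ≤ t) :
    Gamma (s + t) / Gamma (s - t) ≤ (Gamma (s + t / 2) / Gamma (s - t / 2)) ^ 2 := by
  have h1 : 0 < Gamma (s - t) := Gamma_pos_of_pos (by linarith)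
  have h2 : 0 < Gamma (s - t / 2) := Gamma_pos_of_pos (by linarith)
  rw [div_pow, div_le_div_iff₀ h1 (by positivity)]
  linarith [Gamma_mul_Gamma_sq_le hts ht]

lemma Gamma_div_Gamma_le_mul_sq {s t : ℝ} (hts : t < s) (ht : 0 ≤ t) :
    Gamma (s + t) / Gamma (s - t) ≤
      (s - t) * (s + t / 2) ^ 2 / ((s + t) * (s - t / 2) ^ 2) *
        (Gamma (s + t / 2) / Gamma (s - t / 2)) ^ 2 := by
  have hshift := Gamma_div_Gamma_le (s := s + 1) (by linarith) ht
  rw [show s + 1 + t = s + t + 1 by ring, show s + 1 - t = s - t + 1 by ring,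
    show s + 1 + t / 2 = s + t / 2 + 1 by ring, show s + 1 - t / 2 = s - t / 2 + 1 by ring,
    Gamma_add_one_div_Gamma_add_one (by linarith) (by linarith),
    Gamma_add_one_div_Gamma_add_one (by linarith) (by linarith)] at hshift
  have hst : 0 < (s + t) / (s - t) := div_pos (by linarith) (by linarith)
  calc Gamma (s + t) / Gamma (s - t)
      = ((s + t) / (s - t))⁻¹ * ((s + t) / (s - t) * (Gamma (s + t) / Gamma (s - t))) := by
        rw [inv_mul_cancel_left₀ hst.ne']
    _ ≤ ((s + t) / (s - t))⁻¹ * ((s + t / 2) / (s - t / 2) *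
          (Gamma (s + t / 2) / Gamma (s - t / 2))) ^ 2 := by gcongr
    _ = _ := by rw [mul_pow, div_pow, inv_div, ← mul_assoc, div_mul_div_comm]

lemma one_add_mul_log_le_rpow {a : ℝ} (ha : 0 < a) (t : ℝ) : 1 + t * log a ≤ a ^ t := by
  rw [rpow_def_of_pos ha, mul_comm, add_comm]
  exact add_one_le_exp _

lemma three_add_div_three_sub_mul_le_four_rpow {t : ℝ} (ht : 0 ≤ t) (ht' : t ≤ 1 / 2) :
    (3 + 2 * t) / (3 - 2 * t) *
        ((1 / 2 - t) * (1 / 2 + t / 2) ^ 2 / ((1 / 2 + t) * (1 / 2 - t / 2) ^ 2)) ≤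
      (4 : ℝ) ^ t := by
  have hlog : (693 / 500 : ℝ) ≤ log 4 := by
    rw [log_four_eq]
    linarith [log_two_gt_d9]
  have hexp : 1 + t * (693 / 500) ≤ (4 : ℝ) ^ t :=
    le_trans (by gcongr) (one_add_mul_log_le_rpow (by norm_num) t)
  refine le_trans ?_ hexp
  have h3 : 0 < 3 - 2 * t := by linarith
  have h1 : 0 < 1 / 2 - t / 2 := by linarith
  rw [div_mul_div_comm, div_le_iff₀ (by positivity)]
  nlinarith [mul_nonneg ht (sq_nonneg (t - 1 / 10)),
    mul_nonneg (sq_nonneg t) (sq_nonneg (t - 1 / 10)), pow_nonneg ht 4,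
    mul_nonneg (pow_nonneg ht 4) (by linarith : (0 : ℝ) ≤ 1 / 2 - t)]

theorem stmt18 (γ : ℝ) (hγ : 0 < γ) (hγ' : γ < 1 / 2) :
    ((3 + 2 * γ) / (3 - 2 * γ)) *
        ((4 : ℝ) ^ γ * Real.Gamma ((3 + 2 * γ) / 4) * Real.Gamma ((1 + 2 * γ) / 4) /
          (Real.Gamma ((3 - 2 * γ) / 4) * Real.Gamma ((1 - 2 * γ) / 4))) ≤
      (4 : ℝ) ^ γ * Real.Gamma (3 / 4 + γ / 2 - 1 / 4) ^ 2 /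
        Real.Gamma (3 / 4 - γ / 2 - 1 / 4) ^ 2 := by
  have hdup := Gamma_mul_Gamma_add_half_div ((1 + 2 * γ) / 4) ((1 - 2 * γ) / 4)
  rw [show (1 + 2 * γ) / 4 + 1 / 2 = (3 + 2 * γ) / 4 by ring,
    show (1 - 2 * γ) / 4 + 1 / 2 = (3 - 2 * γ) / 4 by ring,
    show (1 - 2 * γ) / 4 - (1 + 2 * γ) / 4 = -γ by ring,
    show 2 * ((1 + 2 * γ) / 4) = 1 / 2 + γ by ring,
    show 2 * ((1 - 2 * γ) / 4) = 1 / 2 - γ by ring] at hdup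
  have hfactor : 0 ≤ (3 + 2 * γ) / (3 - 2 * γ) := div_nonneg (by linarith) (by linarith)
  calc _ = (3 + 2 * γ) / (3 - 2 * γ) * ((4 : ℝ) ^ γ * (Gamma ((1 + 2 * γ) / 4) *
            Gamma ((3 + 2 * γ) / 4) / (Gamma ((1 - 2 * γ) / 4) * Gamma ((3 - 2 * γ) / 4)))) := by
        ring
    _ = (3 + 2 * γ) / (3 - 2 * γ) * (Gamma (1 / 2 + γ) / Gamma (1 / 2 - γ)) := by
        rw [hdup, ← mul_assoc ((4 : ℝ) ^ γ), ← rpow_add (by norm_num), add_neg_cancel,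
          rpow_zero, one_mul]
    _ ≤ (3 + 2 * γ) / (3 - 2 * γ) *
          ((1 / 2 - γ) * (1 / 2 + γ / 2) ^ 2 / ((1 / 2 + γ) * (1 / 2 - γ / 2) ^ 2) *
            (Gamma (1 / 2 + γ / 2) / Gamma (1 / 2 - γ / 2)) ^ 2) :=
        mul_le_mul_of_nonneg_left (Gamma_div_Gamma_le_mul_sq hγ' hγ.le) hfactor
    _ ≤ (4 : ℝ) ^ γ * (Gamma (1 / 2 + γ / 2) / Gamma (1 / 2 - γ / 2)) ^ 2 := by
        rw [← mul_assoc]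
        exact mul_le_mul_of_nonneg_right
          (three_add_div_three_sub_mul_le_four_rpow hγ.le hγ'.le) (sq_nonneg _)
    _ = _ := by
        rw [show (3 : ℝ) / 4 + γ / 2 - 1 / 4 = 1 / 2 + γ / 2 by ring,
          show (3 : ℝ) / 4 - γ / 2 - 1 / 4 = 1 / 2 - γ / 2 by ring, div_pow, mul_div_assoc]
end
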